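/- Fix integers n ≥ 2, 1 ≤ k ≤ n−1, and 1 ≤ j ≤ n, and assume p_{k-1}(x_{j,n}) ≠ 0. Then p^{(1)}_{n-1}(x_{j,n}) ≠ 0 and a_k² Σ_{i=k}^{n-1} λ^{(k)}_{i,n-k}/(x_{j,n} − y_{i,n-k})² = (1/p_{k-1}(x_{j,n})²) · ( a_1 · p_n'(x_{j,n})/p^{(1)}_{n-1}(x_{j,n}) − Σ_{i=0}^{k-1} p_i(x_{j,n})² ). -/

import Mathlib

/-!
Let `x` be a zero of `p_n`. The Wronskian of `p` and `m ↦ p^{(1)}_{m-1}` is the constant `a_1`,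
and the confluent Christoffel–Darboux identity gives `∑_{i<n} p_i(x)² = a_n p_n'(x) p_{n-1}(x)`;
together they turn `a_1 p_n'(x) / p^{(1)}_{n-1}(x)` into `∑_{i<n} p_i(x)²`, so the right-hand side
is `∑_{i=k}^{n-1} p_i(x)² / p_{k-1}(x)²`.

For the left-hand side put `u_m = p^{(k)}_m`, `w_m = p^{(k+1)}_{m-1}` (`w_0 = 0`), `D = u_{n-k}` and
`g = w_{n-k}`. Both sequences solve the order-`k` recurrence with Wronskian `a_{k+1}`, which at the
zeros `y_i` of `D` gives `a_{k+1} λ_i = g(y_i) / D'(y_i)`. Differentiating the partial fraction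
expansion of `g / D` yields `a_{k+1} ∑ λ_i / (x - y_i)² = (D'g - Dg')(x) / D(x)²`, and the confluent
Christoffel–Darboux identity for the solution `g(x) u - D(x) w`, which vanishes at `x` in degree
`n - k`, writes `a_{k+1} (D'g - Dg')(x)` as `∑_{m<n-k} (g(x) u_m(x) - D(x) w_m(x))²`. Finally
`a_{k+1} p_{k+m} = a_{k+1} p_k u_m - a_k p_{k-1} w_m` and `p_n(x) = 0` make each
`g(x) u_m(x) - D(x) w_m(x)` proportional to `p_{k+m}(x)`.
-/

open MeasureTheory Polynomial Finset

section PartialFractions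

variable {ι : Type*} {s : Finset ι} {Y : ι → ℝ} {D g : ℝ[X]}

theorem eq_C_leadingCoeff_mul_nodal (hY : Set.InjOn Y s) (hD : D.degree = #s)
    (hroot : ∀ i ∈ s, D.IsRoot (Y i)) : D = C D.leadingCoeff * Lagrange.nodal s Y := by
  have hD0 : D ≠ 0 := fun h => by simp [h] at hD
  have hlc : D.leadingCoeff ≠ 0 := leadingCoeff_ne_zero.mpr hD0
  refine eq_of_degree_le_of_eval_index_eq s hY hD.le ?_ ?_ ?_
  · rw [degree_C_mul hlc, Lagrange.degree_nodal, hD]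
  · rw [leadingCoeff_mul, leadingCoeff_C, (Lagrange.nodal_monic).leadingCoeff, mul_one]
  · intro i hi
    rw [(hroot i hi).eq_zero, eval_mul, Lagrange.eval_nodal_at_node hi, mul_zero]

theorem sum_div_derivative_div_sub_eq (hY : Set.InjOn Y s) (hD : D.degree = #s)
    (hroot : ∀ i ∈ s, D.IsRoot (Y i)) (hg : g.degree < #s) {t : ℝ} (ht : D.eval t ≠ 0) :
    ∑ i ∈ s, g.eval (Y i) / (derivative D).eval (Y i) / (t - Y i) = g.eval t / D.eval t := by
  classical
  have hfac := eq_C_leadingCoeff_mul_nodal hY hD hroot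
  have htY : ∀ i ∈ s, t ≠ Y i := fun i hi h => ht (h ▸ (hroot i hi).eq_zero)
  have hnodal : (Lagrange.nodal s Y).eval t ≠ 0 := Lagrange.eval_nodal_not_at_node htY
  have hgt : g.eval t = (Lagrange.nodal s Y).eval t *
      ∑ i ∈ s, Lagrange.nodalWeight s Y i * (t - Y i)⁻¹ * g.eval (Y i) := by
    conv_lhs => rw [Lagrange.eq_interpolate hY hg]
    exact Lagrange.eval_interpolate_not_at_node _ htY
  have hDt : D.eval t = D.leadingCoeff * (Lagrange.nodal s Y).eval t := by
    conv_lhs => rw [hfac]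
    rw [eval_mul, eval_C]
  rw [hgt, hDt, mul_comm D.leadingCoeff, mul_div_mul_left _ _ hnodal, sum_div]
  refine sum_congr rfl fun i hi => ?_
  have hwi := Lagrange.nodalWeight_ne_zero hY hi
  have htYi := sub_ne_zero.mpr (htY i hi)
  have hD' : (derivative D).eval (Y i) = D.leadingCoeff * (Lagrange.nodalWeight s Y i)⁻¹ := by
    conv_lhs => rw [hfac]
    rw [derivative_C_mul, eval_mul, eval_C, Lagrange.nodalWeight_eq_eval_derivative_nodal hi,
      inv_inv]
  rw [hD']
  field_simp

theorem sum_div_derivative_div_sub_sq_eq (hY : Set.InjOn Y s) (hD : D.degree = #s)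
    (hroot : ∀ i ∈ s, D.IsRoot (Y i)) (hg : g.degree < #s) {t : ℝ} (ht : D.eval t ≠ 0) :
    ∑ i ∈ s, g.eval (Y i) / (derivative D).eval (Y i) / (t - Y i) ^ 2 =
      ((derivative D).eval t * g.eval t - D.eval t * (derivative g).eval t) / D.eval t ^ 2 := by
  have htY : ∀ i ∈ s, t - Y i ≠ 0 := fun i hi h => ht (sub_eq_zero.mp h ▸ (hroot i hi).eq_zero)
  have hlhs : HasDerivAt (fun y => ∑ i ∈ s, g.eval (Y i) / (derivative D).eval (Y i) / (y - Y i))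
      (∑ i ∈ s, g.eval (Y i) / (derivative D).eval (Y i) * (-1 / (t - Y i) ^ 2)) t := by
    refine HasDerivAt.fun_sum fun i hi => ?_
    simpa [div_eq_mul_inv] using
      (((hasDerivAt_id t).sub_const (Y i)).inv (htY i hi)).const_mul
        (g.eval (Y i) / (derivative D).eval (Y i))
  have hrhs := (g.hasDerivAt t).div (D.hasDerivAt t) ht
  have heq : (fun y => ∑ i ∈ s, g.eval (Y i) / (derivative D).eval (Y i) / (y - Y i)) =ᶠ[nhds t]
      fun y => g.eval y / D.eval y := by
    filter_upwards [D.continuous.continuousAt.eventually_ne ht] with y hy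
    exact sum_div_derivative_div_sub_eq hY hD hroot hg hy
  have h := hlhs.unique (hrhs.congr_of_eventuallyEq heq)
  have hneg : ∑ i ∈ s, g.eval (Y i) / (derivative D).eval (Y i) / (t - Y i) ^ 2 =
      -∑ i ∈ s, g.eval (Y i) / (derivative D).eval (Y i) * (-1 / (t - Y i) ^ 2) := by
    rw [← sum_neg_distrib]
    exact sum_congr rfl fun i _ => by ring
  rw [hneg, h]
  ring

end PartialFractions

theorem degree_eq_of_C_mul_eq {a b c : ℝ} {q r s : ℝ[X]} {d : ℕ} (ha : a ≠ 0)
    (h : C a * q = (X - C b) * r - C c * s) (hr : r.degree = d) (hs : s.degree < d) :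
    q.degree = ↑(d + 1) := by
  have hrX : ((X - C b) * r).degree = ↑(d + 1) := by
    rw [degree_mul, degree_X_sub_C, hr]; norm_cast; omega
  have hcs : (C c * s).degree < ((X - C b) * r).degree := by
    rw [hrX]
    calc (C c * s).degree ≤ s.degree := by rw [← smul_eq_C_mul]; exact degree_smul_le c s
      _ < d := hs
      _ ≤ ↑(d + 1) := by exact_mod_cast d.le_succ
  rw [← degree_C_mul ha, h, degree_sub_eq_left_of_degree_lt hcs, hrX]

-- Only the rows `m + 1 ≥ 1` of the three-term recurrence; the row `X f 0 = A 1 f 1 + B 0 f 0`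
-- (which encodes `f (-1) = 0`) is assumed separately where it is needed.
def SatisfiesRecurrence (A B : ℕ → ℝ) (f : ℕ → ℝ[X]) : Prop :=
  ∀ m, X * f (m + 1) = C (A (m + 2)) * f (m + 2) + C (B (m + 1)) * f (m + 1) + C (A (m + 1)) * f m

namespace SatisfiesRecurrence

variable {A B : ℕ → ℝ} {f g : ℕ → ℝ[X]}

theorem mul_left (hf : SatisfiesRecurrence A B f) (c : ℝ[X]) :
    SatisfiesRecurrence A B (fun m => c * f m) := fun m => by
  linear_combination c * hf m

theorem sub (hf : SatisfiesRecurrence A B f) (hg : SatisfiesRecurrence A B g) :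
    SatisfiesRecurrence A B (fun m => f m - g m) := fun m => by
  linear_combination hf m - hg m

theorem comp_add_left (hf : SatisfiesRecurrence A B f) (j : ℕ) :
    SatisfiesRecurrence (fun i => A (j + i)) (fun i => B (j + i)) (fun m => f (j + m)) :=
  fun m => hf (j + m)

theorem eq_of_initial_eq (hf : SatisfiesRecurrence A B f) (hg : SatisfiesRecurrence A B g)
    (hA : ∀ m, A (m + 2) ≠ 0) (h0 : f 0 = g 0) (h1 : f 1 = g 1) : f = g := by
  suffices h : ∀ m, f m = g m ∧ f (m + 1) = g (m + 1) from funext fun m => (h m).1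
  intro m
  induction m with
  | zero => exact ⟨h0, h1⟩
  | succ m ih =>
    refine ⟨ih.2, mul_left_cancel₀ (C_ne_zero.mpr (hA m)) ?_⟩
    linear_combination hg m - hf m + (X - C (B (m + 1))) * ih.2 - C (A (m + 1)) * ih.1

theorem wronskian_eq (hf : SatisfiesRecurrence A B f) (hg : SatisfiesRecurrence A B g) (m : ℕ) :
    C (A (m + 1)) * (f m * g (m + 1) - f (m + 1) * g m) =
      C (A 1) * (f 0 * g 1 - f 1 * g 0) := by
  induction m with
  | zero => rfl
  | succ m ih => linear_combination ih - f (m + 1) * hg m + g (m + 1) * hf m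

theorem sum_range_sq_eq (hf : SatisfiesRecurrence A B f)
    (h0 : C (A 1) * (derivative (f 1) * f 0 - derivative (f 0) * f 1) = f 0 ^ 2) (M : ℕ) :
    ∑ m ∈ range (M + 1), f m ^ 2 =
      C (A (M + 1)) * (derivative (f (M + 1)) * f M - derivative (f M) * f (M + 1)) := by
  induction M with
  | zero => simpa using h0.symm
  | succ M ih =>
    have h := congrArg derivative (hf M)
    simp only [derivative_add, derivative_mul, derivative_X, derivative_C, one_mul, zero_mul,
      zero_add] at h
    rw [sum_range_succ, ih]
    linear_combination f (M + 1) * h - derivative (f (M + 1)) * hf M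

theorem sum_range_sq_eval_eq_of_isRoot (hf : SatisfiesRecurrence A B f)
    (h0 : C (A 1) * (derivative (f 1) * f 0 - derivative (f 0) * f 1) = f 0 ^ 2) {M : ℕ} {t : ℝ}
    (ht : (f (M + 1)).IsRoot t) :
    ∑ m ∈ range (M + 1), (f m).eval t ^ 2 =
      A (M + 1) * (derivative (f (M + 1))).eval t * (f M).eval t := by
  have h := congrArg (eval t) (hf.sum_range_sq_eq h0 M)
  simp only [eval_finsetSum, eval_pow, eval_mul, eval_sub, eval_C, ht.eq_zero, mul_zero,
    sub_zero] at h
  rw [h, mul_assoc]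

theorem degree_eq (hf : SatisfiesRecurrence A B f) (hA : ∀ m, A (m + 1) ≠ 0) (h0 : f 0 = 1)
    (h0rec : X * f 0 = C (A 1) * f 1 + C (B 0) * f 0) (m : ℕ) : (f m).degree = m := by
  suffices h : ∀ m, (f m).degree = m ∧ (f (m + 1)).degree = ↑(m + 1) from (h m).1
  intro m
  induction m with
  | zero =>
    refine ⟨by simp [h0], degree_eq_of_C_mul_eq (hA 0) (b := B 0) (r := f 0) (c := 0) (s := 0) ?_
      (by simp [h0]) (by simp)⟩
    linear_combination -h0rec
  | succ m ih =>
    refine ⟨ih.2, degree_eq_of_C_mul_eq (hA (m + 1)) (b := B (m + 1)) (c := A (m + 1))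
      (s := f m) ?_ ih.2 ?_⟩
    · linear_combination -hf m
    · rw [ih.1]; exact_mod_cast m.lt_succ_self

variable {u w : ℕ → ℝ[X]}

theorem C_mul_derivative_one_eq_one (hu0 : u 0 = 1)
    (hu0rec : X * u 0 = C (A 1) * u 1 + C (B 0) * u 0) : C (A 1) * derivative (u 1) = 1 := by
  have h := congrArg derivative hu0rec
  simp only [hu0, mul_one, derivative_X, derivative_add, derivative_mul, derivative_C, zero_mul,
    zero_add, add_zero] at h
  exact h.symm

theorem sum_range_sq_eval_eq_derivative_wronskian (hu : SatisfiesRecurrence A B u)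
    (hw : SatisfiesRecurrence A B w) (hu0 : u 0 = 1)
    (hu0rec : X * u 0 = C (A 1) * u 1 + C (B 0) * u 0) (hw0 : w 0 = 0) (hw1 : w 1 = 1)
    (M : ℕ) (t : ℝ) :
    ∑ m ∈ range (M + 1),
        ((w (M + 1)).eval t * (u m).eval t - (u (M + 1)).eval t * (w m).eval t) ^ 2 =
      A 1 * ((derivative (u (M + 1))).eval t * (w (M + 1)).eval t -
        (u (M + 1)).eval t * (derivative (w (M + 1))).eval t) := by
  set c := (w (M + 1)).eval t
  set d := (u (M + 1)).eval t
  -- `r` solves the recurrence and vanishes at `t` in degree `M + 1`, so the confluent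
  -- Christoffel–Darboux identity applies to it at `t`
  set r : ℕ → ℝ[X] := fun m => C c * u m - C d * w m with hr_def
  have hr : SatisfiesRecurrence A B r := (hu.mul_left _).sub (hw.mul_left _)
  have hr0 : C (A 1) * (derivative (r 1) * r 0 - derivative (r 0) * r 1) = r 0 ^ 2 := by
    simp only [hr_def, hu0, hw0, hw1, derivative_sub, derivative_mul, derivative_C, zero_mul,
      zero_add, mul_zero, sub_zero, mul_one]
    linear_combination C c ^ 2 * C_mul_derivative_one_eq_one hu0 hu0rec
  have hroot : (r (M + 1)).IsRoot t := by
    simp only [IsRoot, hr_def, eval_sub, eval_mul, eval_C, c, d]; ring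
  have hW := congrArg (eval t) (hu.wronskian_eq hw M)
  simp only [hu0, hw0, hw1, eval_mul, eval_sub, eval_C, mul_one, mul_zero,
    sub_zero] at hW
  have hCD := hr.sum_range_sq_eval_eq_of_isRoot hr0 hroot
  simp only [hr_def, eval_sub, eval_mul, eval_C, derivative_sub, derivative_mul, derivative_C,
    zero_mul, zero_add] at hCD
  rw [hCD]
  linear_combination
    ((derivative (u (M + 1))).eval t * c - d * (derivative (w (M + 1))).eval t) * hW

theorem derivative_div_eval_eq_sum_range_sq (hu : SatisfiesRecurrence A B u)
    (hw : SatisfiesRecurrence A B w) (hA1 : A 1 ≠ 0) (hu0 : u 0 = 1)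
    (hu0rec : X * u 0 = C (A 1) * u 1 + C (B 0) * u 0) (hw0 : w 0 = 0) (hw1 : w 1 = 1)
    {N : ℕ} {t : ℝ} (ht : (u (N + 1)).IsRoot t) :
    (w (N + 1)).eval t ≠ 0 ∧
      A 1 * (derivative (u (N + 1))).eval t / (w (N + 1)).eval t =
        ∑ m ∈ range (N + 1), (u m).eval t ^ 2 := by
  have hW := congrArg (eval t) (hu.wronskian_eq hw N)
  simp only [hu0, hw0, hw1, eval_mul, eval_sub, eval_C, ht.eq_zero, mul_one,
    mul_zero, zero_mul, sub_zero] at hW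
  have hwt : (w (N + 1)).eval t ≠ 0 := fun h => hA1 (by simpa [h] using hW.symm)
  have hu1 : C (A 1) * (derivative (u 1) * u 0 - derivative (u 0) * u 1) = u 0 ^ 2 := by
    simpa [hu0] using C_mul_derivative_one_eq_one hu0 hu0rec
  refine ⟨hwt, ?_⟩
  rw [hu.sum_range_sq_eval_eq_of_isRoot hu1 ht, div_eq_iff hwt]
  linear_combination -(derivative (u (N + 1))).eval t * hW

theorem sq_mul_sum_div_sq_eq_sum_sq_div_sq (hu : SatisfiesRecurrence A B u)
    (hw : SatisfiesRecurrence A B w) (hA1 : A 1 ≠ 0) (hu0 : u 0 = 1)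
    (hu0rec : X * u 0 = C (A 1) * u 1 + C (B 0) * u 0) (hw0 : w 0 = 0) (hw1 : w 1 = 1)
    {M : ℕ} {ι : Type*} {s : Finset ι} {Y : ι → ℝ} (hY : Set.InjOn Y s)
    (hdegu : (u (M + 1)).degree = #s) (hdegw : (w (M + 1)).degree < #s)
    (hroot : ∀ i ∈ s, (u (M + 1)).IsRoot (Y i)) {t : ℝ} (ht : (u (M + 1)).eval t ≠ 0) :
    A 1 ^ 2 * ∑ i ∈ s, (A (M + 1) * (derivative (u (M + 1))).eval (Y i) * (u M).eval (Y i))⁻¹ /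
        (t - Y i) ^ 2 =
      ∑ m ∈ range (M + 1),
        ((w (M + 1)).eval t * (u m).eval t - (u (M + 1)).eval t * (w m).eval t) ^ 2 /
          (u (M + 1)).eval t ^ 2 := by
  have hnode : ∀ i ∈ s, A 1 * (A (M + 1) * (derivative (u (M + 1))).eval (Y i) *
      (u M).eval (Y i))⁻¹ = (w (M + 1)).eval (Y i) / (derivative (u (M + 1))).eval (Y i) := by
    intro i hi
    have hW := congrArg (eval (Y i)) (hu.wronskian_eq hw M)
    simp only [hu0, hw0, hw1, eval_mul, eval_sub, eval_C, (hroot i hi).eq_zero, mul_one, mul_zero,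
      zero_mul, sub_zero] at hW
    have hAu : A (M + 1) * (u M).eval (Y i) ≠ 0 := fun h =>
      hA1 (by rw [← hW, ← mul_assoc, h, zero_mul])
    rw [← hW]
    field_simp
    exact mul_div_mul_left _ _ hAu
  calc A 1 ^ 2 * ∑ i ∈ s, (A (M + 1) * (derivative (u (M + 1))).eval (Y i) *
          (u M).eval (Y i))⁻¹ / (t - Y i) ^ 2
      = A 1 * ∑ i ∈ s, (w (M + 1)).eval (Y i) / (derivative (u (M + 1))).eval (Y i) /
          (t - Y i) ^ 2 := by
        rw [mul_sum, mul_sum]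
        exact sum_congr rfl fun i hi => by rw [← hnode i hi]; ring
    _ = A 1 * (((derivative (u (M + 1))).eval t * (w (M + 1)).eval t -
          (u (M + 1)).eval t * (derivative (w (M + 1))).eval t) / (u (M + 1)).eval t ^ 2) := by
        rw [sum_div_derivative_div_sub_sq_eq hY hdegu hroot hdegw ht]
    _ = _ := by
        rw [← sum_div, hu.sum_range_sq_eval_eq_derivative_wronskian hw hu0 hu0rec hw0 hw1]
        ring

end SatisfiesRecurrence

theorem eq_one_of_degree_eq_zero_of_integral_sq {μ : Measure ℝ} [IsProbabilityMeasure μ]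
    {q : ℝ[X]} (hdeg : q.degree = 0) (hlead : 0 < q.leadingCoeff)
    (hnorm : ∫ t, q.eval t * q.eval t ∂μ = 1) : q = 1 := by
  obtain ⟨c, rfl⟩ : ∃ c, q = C c := ⟨_, eq_C_of_degree_eq_zero hdeg⟩
  simp only [eval_C, integral_const, probReal_univ, one_smul, leadingCoeff_C] at hnorm hlead
  rw [show c = 1 by nlinarith, map_one]

def prependZero {α : Type*} [Zero α] (f : ℕ → α) : ℕ → α
  | 0 => 0
  | m + 1 => f m

@[simp] theorem prependZero_zero {α : Type*} [Zero α] (f : ℕ → α) : prependZero f 0 = 0 := rfl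

@[simp] theorem prependZero_succ {α : Type*} [Zero α] (f : ℕ → α) (m : ℕ) :
    prependZero f (m + 1) = f m := rfl

structure IsAssociatedFamily (a b : ℕ → ℝ) (P : ℕ → ℕ → ℝ[X]) : Prop where
  zero : ∀ k, P k 0 = 1
  rec_zero : ∀ k, X * P k 0 = C (a (k + 1)) * P k 1 + C (b k) * P k 0
  rec_succ : ∀ k m, X * P k (m + 1) = C (a (m + k + 2)) * P k (m + 2) +
    C (b (m + k + 1)) * P k (m + 1) + C (a (m + k + 1)) * P k m

namespace IsAssociatedFamily

variable {a b : ℕ → ℝ} {p : ℕ → ℝ[X]} {P : ℕ → ℕ → ℝ[X]}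

theorem satisfiesRecurrence (hP : IsAssociatedFamily a b P) (k : ℕ) :
    SatisfiesRecurrence (fun i => a (k + i)) (fun i => b (k + i)) (P k) := fun m => by
  have h := hP.rec_succ k m
  rwa [show m + k + 2 = k + (m + 2) by omega, show m + k + 1 = k + (m + 1) by omega] at h

theorem satisfiesRecurrence_prependZero (hP : IsAssociatedFamily a b P) (k : ℕ) :
    SatisfiesRecurrence (fun i => a (k + i)) (fun i => b (k + i)) (prependZero (P (k + 1))) := by
  rintro (_ | m)
  · simpa using hP.rec_zero (k + 1)
  · have h := hP.rec_succ (k + 1) m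
    rwa [show m + (k + 1) + 2 = k + (m + 1 + 2) by omega,
      show m + (k + 1) + 1 = k + (m + 1 + 1) by omega] at h

theorem degree_eq (hP : IsAssociatedFamily a b P) (ha : ∀ m, a (m + 1) ≠ 0) (k m : ℕ) :
    (P k m).degree = m :=
  (hP.satisfiesRecurrence k).degree_eq (fun _ => ha _) (hP.zero k) (hP.rec_zero k) m

-- From here on the order is written `k + 1` (the `k ≥ 1` of the statement, so that `p_{k-1}` is
-- `p k`) and the degree `n - k` of the associated polynomial is written `M + 1`.
theorem decomposition (hP : IsAssociatedFamily a b P) (hp : SatisfiesRecurrence a b p)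
    (ha : ∀ m, a (m + 1) ≠ 0) (k m : ℕ) :
    C (a (k + 2)) * p (k + 1 + m) =
      C (a (k + 2)) * p (k + 1) * P (k + 1) m -
        C (a (k + 1)) * p k * prependZero (P (k + 2)) m := by
  refine congrFun (((hp.comp_add_left (k + 1)).mul_left _).eq_of_initial_eq
    (((hP.satisfiesRecurrence (k + 1)).mul_left _).sub
      ((hP.satisfiesRecurrence_prependZero (k + 1)).mul_left _))
    (fun m => ha _) ?_ ?_) m
  · simp [hP.zero]
  · have h := hP.rec_zero (k + 1)
    simp only [prependZero, hP.zero] at h ⊢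
    linear_combination p (k + 1) * h - hp k

theorem eval_combination_of_isRoot (hP : IsAssociatedFamily a b P)
    (hp : SatisfiesRecurrence a b p) (ha : ∀ m, a (m + 1) ≠ 0) {k M : ℕ} {x : ℝ}
    (hx : (p (k + 1 + (M + 1))).IsRoot x) (m : ℕ) :
    a (k + 1) * (p k).eval x * ((P (k + 2) M).eval x * (P (k + 1) m).eval x -
      (P (k + 1) (M + 1)).eval x * (prependZero (P (k + 2)) m).eval x) =
        a (k + 2) * (P (k + 1) (M + 1)).eval x * (p (k + 1 + m)).eval x := by
  have hdec : ∀ m, a (k + 2) * (p (k + 1 + m)).eval x = a (k + 2) * (p (k + 1)).eval x *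
      (P (k + 1) m).eval x - a (k + 1) * (p k).eval x * (prependZero (P (k + 2)) m).eval x :=
    fun m => by simpa using congrArg (eval x) (hP.decomposition hp ha k m)
  have hdecM := hdec (M + 1)
  rw [hx.eq_zero, mul_zero, prependZero_succ] at hdecM
  linear_combination (P (k + 1) m).eval x * hdecM - (P (k + 1) (M + 1)).eval x * hdec m

theorem eval_ne_zero_of_isRoot (hP : IsAssociatedFamily a b P) (hp : SatisfiesRecurrence a b p)
    (ha : ∀ m, a (m + 1) ≠ 0) {k M : ℕ} {x : ℝ} (hx : (p (k + 1 + (M + 1))).IsRoot x)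
    (hpk : (p k).eval x ≠ 0) : (P (k + 1) (M + 1)).eval x ≠ 0 := by
  intro h0
  have hg : (P (k + 2) M).eval x = 0 := by
    simpa [h0, hP.zero, ha, hpk] using hP.eval_combination_of_isRoot hp ha hx 0
  have hW := congrArg (eval x)
    ((hP.satisfiesRecurrence (k + 1)).wronskian_eq (hP.satisfiesRecurrence_prependZero (k + 1)) M)
  simp only [prependZero_succ, eval_mul, eval_C, eval_sub, hg, mul_zero, h0, zero_mul, sub_self,
    hP.zero, mul_one, prependZero_zero, sub_zero] at hW
  exact ha (k + 1) hW.symm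

theorem sq_mul_sum_christoffel_div_sq_eq (hP : IsAssociatedFamily a b P)
    (hp : SatisfiesRecurrence a b p) (ha : ∀ m, a (m + 1) ≠ 0) {k M : ℕ} {ι : Type*}
    {s : Finset ι} {Y : ι → ℝ} (hY : Set.InjOn Y s) (hs : #s = M + 1)
    (hroot : ∀ i ∈ s, (P (k + 1) (M + 1)).IsRoot (Y i)) {x : ℝ}
    (hx : (p (k + 1 + (M + 1))).IsRoot x) (hpk : (p k).eval x ≠ 0) :
    a (k + 1) ^ 2 * ∑ i ∈ s, (a (k + 1 + (M + 1)) * (derivative (P (k + 1) (M + 1))).eval (Y i) *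
        (P (k + 1) M).eval (Y i))⁻¹ / (x - Y i) ^ 2 =
      ∑ m ∈ range (M + 1), (p (k + 1 + m)).eval x ^ 2 / (p k).eval x ^ 2 := by
  have hdegu : (P (k + 1) (M + 1)).degree = #s := by rw [hs, hP.degree_eq ha]
  have hdegw : (prependZero (P (k + 2)) (M + 1)).degree < #s := by
    rw [hs, prependZero_succ, hP.degree_eq ha]
    exact_mod_cast M.lt_succ_self
  have hux := hP.eval_ne_zero_of_isRoot hp ha hx hpk
  have hw : SatisfiesRecurrence (fun i => a (k + 1 + i)) (fun i => b (k + 1 + i))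
      (prependZero (P (k + 2))) := hP.satisfiesRecurrence_prependZero (k + 1)
  have key := (hP.satisfiesRecurrence (k + 1)).sq_mul_sum_div_sq_eq_sum_sq_div_sq hw (ha _)
    (hP.zero _) (hP.rec_zero _) rfl (hP.zero _) hY hdegu hdegw hroot hux
  have hterm : ∀ m, ((prependZero (P (k + 2)) (M + 1)).eval x * (P (k + 1) m).eval x -
      (P (k + 1) (M + 1)).eval x * (prependZero (P (k + 2)) m).eval x) ^ 2 /
        (P (k + 1) (M + 1)).eval x ^ 2 =
      (a (k + 2) / a (k + 1)) ^ 2 * ((p (k + 1 + m)).eval x ^ 2 / (p k).eval x ^ 2) := by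
    intro m
    have h := hP.eval_combination_of_isRoot hp ha hx m
    rw [prependZero_succ, eq_div_of_mul_eq (mul_ne_zero (ha k) hpk) ((mul_comm _ _).trans h)]
    field_simp
  simp only [hterm, ← mul_sum] at key
  apply mul_left_cancel₀ (pow_ne_zero 2 (ha (k + 1)))
  calc a (k + 2) ^ 2 * (a (k + 1) ^ 2 * _)
      = a (k + 1) ^ 2 * ((a (k + 2) / a (k + 1)) ^ 2 * ∑ m ∈ range (M + 1),
          (p (k + 1 + m)).eval x ^ 2 / (p k).eval x ^ 2) := by rw [← key]; ring
    _ = _ := by have := ha k; field_simp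

end IsAssociatedFamily

theorem stmt_19_general
    (μ : Measure ℝ) [IsProbabilityMeasure μ]
    (p : ℕ → Polynomial ℝ)
    (hdeg : ∀ m : ℕ, (p m).degree = m)
    (hlead : ∀ m : ℕ, 0 < (p m).leadingCoeff)
    (horth : ∀ m l : ℕ, ∫ t, (p m).eval t * (p l).eval t ∂μ = if m = l then 1 else 0)
    (a b : ℕ → ℝ)
    (hapos : ∀ m : ℕ, 1 ≤ m → 0 < a m)
    (hrec0 : Polynomial.X * p 0 = Polynomial.C (a 1) * p 1 + Polynomial.C (b 0) * p 0)
    (hrec : ∀ m : ℕ, Polynomial.X * p (m + 1) =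
      Polynomial.C (a (m + 2)) * p (m + 2) + Polynomial.C (b (m + 1)) * p (m + 1) +
        Polynomial.C (a (m + 1)) * p m)
    (x : ℕ → ℕ → ℝ)
    (hxroot : ∀ m j : ℕ, 1 ≤ j → j ≤ m → (p m).eval (x m j) = 0)
    (P : ℕ → ℕ → Polynomial ℝ)
    (hP0 : ∀ k : ℕ, P k 0 = 1)
    (hPrec0 : ∀ k : ℕ, Polynomial.X * P k 0 =
      Polynomial.C (a (k + 1)) * P k 1 + Polynomial.C (b k) * P k 0)
    (hPrec : ∀ k m : ℕ, Polynomial.X * P k (m + 1) =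
      Polynomial.C (a (m + k + 2)) * P k (m + 2) + Polynomial.C (b (m + k + 1)) * P k (m + 1) +
        Polynomial.C (a (m + k + 1)) * P k m)
    (n k : ℕ) (hk1 : 1 ≤ k) (hk2 : k ≤ n - 1)
    (Y : ℕ → ℝ)
    (hYroot : ∀ i : ℕ, k ≤ i → i ≤ n - 1 → (P k (n - k)).eval (Y i) = 0)
    (hYmono : ∀ i : ℕ, k ≤ i → i + 1 ≤ n - 1 → Y i < Y (i + 1))
    (lamk : ℕ → ℝ)
    (hlamk : ∀ i : ℕ, k ≤ i → i ≤ n - 1 → lamk i =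
      (a n * ((Polynomial.derivative (P k (n - k))).eval (Y i)) *
        ((P k (n - k - 1)).eval (Y i)))⁻¹)
    (j : ℕ) (hj1 : 1 ≤ j) (hj2 : j ≤ n)
    (hpk : (p (k - 1)).eval (x n j) ≠ 0) :
    (P 1 (n - 1)).eval (x n j) ≠ 0 ∧
    a k ^ 2 * ∑ i ∈ Finset.Icc k (n - 1), lamk i / (x n j - Y i) ^ 2 =
      (1 / ((p (k - 1)).eval (x n j)) ^ 2) *
        (a 1 * ((Polynomial.derivative (p n)).eval (x n j)) / (P 1 (n - 1)).eval (x n j) -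
          ∑ i ∈ Finset.range k, ((p i).eval (x n j)) ^ 2) := by
  obtain ⟨k, rfl⟩ : ∃ k', k = k' + 1 := ⟨k - 1, by omega⟩
  obtain ⟨M, rfl⟩ : ∃ M, n = k + 1 + (M + 1) := ⟨n - k - 2, by omega⟩
  have hn1 : k + 1 + (M + 1) - 1 = k + 1 + M := by omega
  simp only [hn1, Nat.add_sub_cancel, Nat.add_sub_cancel_left] at hYroot hYmono hlamk hpk ⊢
  have hp : SatisfiesRecurrence a b p := hrec
  have hP : IsAssociatedFamily a b P := ⟨hP0, hPrec0, hPrec⟩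
  have ha : ∀ m, a (m + 1) ≠ 0 := fun m => (hapos (m + 1) m.succ_pos).ne'
  have hp0 : p 0 = 1 :=
    eq_one_of_degree_eq_zero_of_integral_sq (μ := μ) (by simpa using hdeg 0) (hlead 0)
      (by simpa using horth 0 0)
  set t := x (k + 1 + (M + 1)) j
  have hx : (p (k + 1 + (M + 1))).IsRoot t := hxroot _ j hj1 hj2
  obtain ⟨hP1, hright⟩ : (P 1 (k + 1 + M)).eval t ≠ 0 ∧
      a 1 * (derivative (p (k + 1 + (M + 1)))).eval t / (P 1 (k + 1 + M)).eval t =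
        ∑ i ∈ range (k + 1 + (M + 1)), (p i).eval t ^ 2 := hp.derivative_div_eval_eq_sum_range_sq
    (by simpa only [zero_add] using hP.satisfiesRecurrence_prependZero 0)
    (ha 0) hp0 hrec0 rfl (hP0 1) hx
  refine ⟨hP1, ?_⟩
  have hY : Set.InjOn Y (Icc (k + 1) (k + 1 + M)) := by
    rw [coe_Icc]
    exact (strictMonoOn_of_lt_add_one Set.ordConnected_Icc
      fun i _ hi hi1 => hYmono i hi.1 hi1.2).injOn
  rw [sum_congr rfl fun i hi => by rw [hlamk i (mem_Icc.mp hi).1 (mem_Icc.mp hi).2],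
    hP.sq_mul_sum_christoffel_div_sq_eq hp ha hY (by simp; omega)
      (fun i hi => hYroot i (mem_Icc.mp hi).1 (mem_Icc.mp hi).2) hx hpk,
    hright, sum_range_add _ (k + 1) (M + 1), add_sub_cancel_left, mul_sum]
  exact sum_congr rfl fun m _ => by ring

theorem stmt_19
    (μ : Measure ℝ) [IsProbabilityMeasure μ]
    (lo hi : ℝ)
    (hsupp : μ (Set.Icc lo hi)ᶜ = 0)
    (hinf : ∀ s : Finset ℝ, μ (↑s : Set ℝ)ᶜ ≠ 0)
    (p : ℕ → Polynomial ℝ)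
    (hdeg : ∀ m : ℕ, (p m).degree = m)
    (hlead : ∀ m : ℕ, 0 < (p m).leadingCoeff)
    (horth : ∀ m l : ℕ, ∫ t, (p m).eval t * (p l).eval t ∂μ = if m = l then 1 else 0)
    (a b : ℕ → ℝ)
    (hapos : ∀ m : ℕ, 1 ≤ m → 0 < a m)
    (hrec0 : Polynomial.X * p 0 = Polynomial.C (a 1) * p 1 + Polynomial.C (b 0) * p 0)
    (hrec : ∀ m : ℕ, Polynomial.X * p (m + 1) =
      Polynomial.C (a (m + 2)) * p (m + 2) + Polynomial.C (b (m + 1)) * p (m + 1) +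
        Polynomial.C (a (m + 1)) * p m)
    (x : ℕ → ℕ → ℝ)
    (hxroot : ∀ m j : ℕ, 1 ≤ j → j ≤ m → (p m).eval (x m j) = 0)
    (hxmono : ∀ m j : ℕ, 1 ≤ j → j + 1 ≤ m → x m j < x m (j + 1))
    (P : ℕ → ℕ → Polynomial ℝ)
    (hP0 : ∀ k : ℕ, P k 0 = 1)
    (hPrec0 : ∀ k : ℕ, Polynomial.X * P k 0 =
      Polynomial.C (a (k + 1)) * P k 1 + Polynomial.C (b k) * P k 0)
    (hPrec : ∀ k m : ℕ, Polynomial.X * P k (m + 1) =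
      Polynomial.C (a (m + k + 2)) * P k (m + 2) + Polynomial.C (b (m + k + 1)) * P k (m + 1) +
        Polynomial.C (a (m + k + 1)) * P k m)
    (n k : ℕ) (hn : 2 ≤ n) (hk1 : 1 ≤ k) (hk2 : k ≤ n - 1)
    (Y : ℕ → ℝ)
    (hYroot : ∀ i : ℕ, k ≤ i → i ≤ n - 1 → (P k (n - k)).eval (Y i) = 0)
    (hYmono : ∀ i : ℕ, k ≤ i → i + 1 ≤ n - 1 → Y i < Y (i + 1))
    (lamk : ℕ → ℝ)
    (hlamk : ∀ i : ℕ, k ≤ i → i ≤ n - 1 → lamk i =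
      (a n * ((Polynomial.derivative (P k (n - k))).eval (Y i)) *
        ((P k (n - k - 1)).eval (Y i)))⁻¹)
    (j : ℕ) (hj1 : 1 ≤ j) (hj2 : j ≤ n)
    (hpk : (p (k - 1)).eval (x n j) ≠ 0) :
    (P 1 (n - 1)).eval (x n j) ≠ 0 ∧
    a k ^ 2 * ∑ i ∈ Finset.Icc k (n - 1), lamk i / (x n j - Y i) ^ 2 =
      (1 / ((p (k - 1)).eval (x n j)) ^ 2) *
        (a 1 * ((Polynomial.derivative (p n)).eval (x n j)) / (P 1 (n - 1)).eval (x n j) -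
          ∑ i ∈ Finset.range k, ((p i).eval (x n j)) ^ 2) :=
  stmt_19_general μ p hdeg hlead horth a b hapos hrec0 hrec x hxroot P hP0 hPrec0 hPrec n k hk1 hk2
    Y hYroot hYmono lamk hlamk j hj1 hj2 hpk
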